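/- arXiv:0804.3816 — 4 statements merged into one kernel-verified Lean document; each statement's English description precedes it below -/
import Mathlib

section
/- For integers 0 ≤ k ≤ r and j ∈ {0,...,r}, let S^j_k(x) denote the k-th elementary symmetric polynomial in the variables x_0, ..., x_r with x_j omitted. If ξ is a primitive (r+1)-th root of unity, then S^j_k(ξ^0, ξ^1, ..., ξ^r) = (−1)^k ξ^{k·j}. -/
/-!
The `(r+1)`-th roots of unity are the roots of `X^(r+1) - 1`, so by Vieta their elementary
symmetric functions `e_i` vanish for `0 < i < r + 1`. Removing the root `a = ξ^j` from the
multiset, the recursion `e_(i+1)(a :: s) = e_(i+1)(s) + a e_i(s)` then forces `e_k(s) = (-a)^k`.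
-/

open Polynomial

namespace Multiset

variable {R : Type*}

theorem esymm_cons_succ [CommSemiring R] (a : R) (s : Multiset R) (k : ℕ) :
    (a ::ₘ s).esymm (k + 1) = s.esymm (k + 1) + a * s.esymm k := by
  simp only [esymm, powersetCard_cons, map_add, sum_add, map_map, Function.comp_def, prod_cons,
    sum_map_mul_left]

theorem esymm_eq_neg_pow_of_esymm_cons_eq_zero [CommRing R] {a : R} {s : Multiset R} {k : ℕ}
    (h : ∀ i, 0 < i → i ≤ k → (a ::ₘ s).esymm i = 0) : s.esymm k = (-a) ^ k := by
  induction k with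
  | zero => simp [esymm]
  | succ k ih =>
    have hcons := esymm_cons_succ a s k
    rw [h (k + 1) k.succ_pos le_rfl, ih fun i hi hik => h i hi (by omega)] at hcons
    rw [pow_succ, eq_neg_of_add_eq_zero_left hcons.symm]
    ring

end Multiset

theorem IsPrimitiveRoot.esymm_nthRoots_one_eq_zero {R : Type*} [CommRing R] [IsDomain R]
    {ζ : R} {n k : ℕ} (hζ : IsPrimitiveRoot ζ n) (hk : 0 < k) (hkn : k < n) :
    (nthRoots n (1 : R)).esymm k = 0 := by
  have hdeg : (X ^ n - C 1 : R[X]).natDegree = n := natDegree_X_pow_sub_C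
  have hroots : Multiset.card (X ^ n - C 1 : R[X]).roots = (X ^ n - C 1 : R[X]).natDegree := by
    rw [hdeg]
    exact hζ.card_nthRoots_one
  have hvieta := coeff_eq_esymm_roots_of_card hroots (k := n - k) (by omega)
  rw [hdeg, Nat.sub_sub_self hkn.le, coeff_sub, coeff_X_pow, coeff_C, if_neg (by omega),
    if_neg (by omega), sub_zero, leadingCoeff_X_pow_sub_C (by omega), one_mul] at hvieta
  exact (mul_eq_zero.mp hvieta.symm).resolve_left (pow_ne_zero _ (neg_ne_zero.mpr one_ne_zero))

theorem stmt_4_general (r : ℕ) (ξ : ℂ) (hξ : IsPrimitiveRoot ξ (r + 1))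
    (j k : ℕ) (hj : j ≤ r) (hk : k ≤ r) :
    ∑ t ∈ ((Finset.range (r + 1)).erase j).powersetCard k, ∏ l ∈ t, ξ ^ l
      = (-1 : ℂ) ^ k * ξ ^ (k * j) := by
  have hcons :
      ξ ^ j ::ₘ ((Finset.range (r + 1)).erase j).val.map (ξ ^ ·) = nthRoots (r + 1) 1 := by
    rw [← Multiset.map_cons, ← Finset.insert_val_of_notMem (Finset.notMem_erase j _),
      Finset.insert_erase (Finset.mem_range.mpr (by omega)), hξ.nthRoots_eq (one_pow _)]
    simp
  rw [← Finset.esymm_map_val, Multiset.esymm_eq_neg_pow_of_esymm_cons_eq_zero fun i hi hik =>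
    hcons ▸ hξ.esymm_nthRoots_one_eq_zero hi (by omega), neg_pow, pow_mul']

/-- If `ξ` is a primitive `(r+1)`-th root of unity, then the `k`-th elementary
symmetric polynomial in the variables `ξ^0, …, ξ^r` with `ξ^j` omitted equals
`(−1)^k ξ^(k·j)`. -/
theorem stmt_4 (r : ℕ) (hr : 0 < r) (ξ : ℂ) (hξ : IsPrimitiveRoot ξ (r + 1))
    (j k : ℕ) (hj : j ≤ r) (hk : k ≤ r) :
    ∑ t ∈ ((Finset.range (r + 1)).erase j).powersetCard k, ∏ l ∈ t, ξ ^ l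
      = (-1 : ℂ) ^ k * ξ ^ (k * j) :=
  stmt_4_general r ξ hξ j k hj hk
end

section
/- Let ξ be a primitive (r+1)-th root of unity and for 1 ≤ k ≤ r define g_k(ξ) = (1/(ξ^k − 1)) · (∑_{μ=1}^r μ ξ^{μk}) · (∑_{μ=1}^r μ ξ^{−μk}). Then ∑_{k=1}^{r} (ξ^k + 1)·g_k(ξ) = 0. -/
/-!
Substituting `k ↦ r + 1 - k` replaces `ξ ^ k` by `(ξ ^ k)⁻¹`. Each summand is odd under
`ζ ↦ ζ⁻¹`: the product of the two weighted power sums is symmetric, while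
`(ζ⁻¹ + 1) / (ζ⁻¹ - 1) = -(ζ + 1) / (ζ - 1)`. Hence the sum equals its own negative.
-/

open Finset

theorem sum_Icc_inv_pow_eq {G M : Type*} [DivisionMonoid G] [AddCommMonoid M] (F : G → M)
    {ξ : G} {r : ℕ} (hξ : ξ ^ (r + 1) = 1) :
    ∑ k ∈ Icc 1 r, F (ξ ^ k)⁻¹ = ∑ k ∈ Icc 1 r, F (ξ ^ k) := by
  refine sum_nbij' (fun k => r + 1 - k) (fun k => r + 1 - k) ?_ ?_ ?_ ?_ ?_
  all_goals intro k hk; simp only [mem_Icc] at hk ⊢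
  any_goals omega
  congr 1
  refine inv_eq_of_mul_eq_one_left ?_
  rw [← pow_add, Nat.sub_add_cancel (by omega), hξ]

section Field

variable {K : Type*} [Field K]

/-- Also true at `ζ = 1`, where both sides are `0` because `0⁻¹ = 0`. -/
theorem inv_add_one_mul_inv_inv_sub_one {ζ : K} (hζ : ζ ≠ 0) :
    (ζ⁻¹ + 1) * (ζ⁻¹ - 1)⁻¹ = -((ζ + 1) * (ζ - 1)⁻¹) := by
  by_cases h1 : ζ = 1
  · simp [h1]
  field_simp
  ring

def weightedPowSum (r : ℕ) (ζ : K) : K :=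
  ∑ μ ∈ Icc 1 r, (μ : K) * ζ ^ μ

def cayleyTerm (r : ℕ) (ζ : K) : K :=
  (ζ + 1) * ((ζ - 1)⁻¹ * weightedPowSum r ζ * weightedPowSum r ζ⁻¹)

theorem cayleyTerm_inv (r : ℕ) {ζ : K} (hζ : ζ ≠ 0) : cayleyTerm r ζ⁻¹ = -cayleyTerm r ζ := by
  unfold cayleyTerm
  rw [inv_inv]
  linear_combination weightedPowSum r ζ * weightedPowSum r ζ⁻¹ *
    inv_add_one_mul_inv_inv_sub_one hζ

end Field

theorem stmt_6_general (r : ℕ) (ξ : ℂ) (hξ : IsPrimitiveRoot ξ (r + 1)) :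
    ∑ k ∈ Finset.Icc 1 r, (ξ ^ k + 1) *
      ((ξ ^ k - 1)⁻¹ * (∑ μ ∈ Finset.Icc 1 r, (μ : ℂ) * ξ ^ (μ * k))
        * (∑ μ ∈ Finset.Icc 1 r, (μ : ℂ) * ξ ^ (-((μ : ℤ) * k)))) = 0 := by
  have hξ0 : ξ ≠ 0 := hξ.ne_zero r.succ_ne_zero
  have hterm (k : ℕ) : (ξ ^ k + 1) *
      ((ξ ^ k - 1)⁻¹ * (∑ μ ∈ Finset.Icc 1 r, (μ : ℂ) * ξ ^ (μ * k))
        * (∑ μ ∈ Finset.Icc 1 r, (μ : ℂ) * ξ ^ (-((μ : ℤ) * k)))) = cayleyTerm r (ξ ^ k) := by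
    have hpow (μ : ℕ) : ξ ^ (μ * k) = (ξ ^ k) ^ μ := by rw [mul_comm, pow_mul]
    have hzpow (μ : ℕ) : ξ ^ (-((μ : ℤ) * k)) = (ξ ^ k)⁻¹ ^ μ := by
      rw [inv_pow, ← hpow, zpow_neg, ← Nat.cast_mul, zpow_natCast]
    simp only [cayleyTerm, weightedPowSum, hpow, hzpow]
  simp only [hterm]
  set S := ∑ k ∈ Icc 1 r, cayleyTerm r (ξ ^ k)
  have hS : S = -S := calc
    S = ∑ k ∈ Icc 1 r, cayleyTerm r (ξ ^ k)⁻¹ := (sum_Icc_inv_pow_eq _ hξ.pow_eq_one).symm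
    _ = -S := by
      rw [← sum_neg_distrib]
      exact sum_congr rfl fun k _ => cayleyTerm_inv r (pow_ne_zero k hξ0)
  exact self_eq_neg.mp hS

/-- With `ξ` a primitive `(r+1)`-th root of unity and
`g_k(ξ) = (ξ^k−1)⁻¹ (∑_{μ=1}^r μ ξ^{μk})(∑_{μ=1}^r μ ξ^{−μk})`, one has
`∑_{k=1}^r (ξ^k + 1) g_k(ξ) = 0`. -/
theorem stmt_6 (r : ℕ) (hr : 0 < r) (ξ : ℂ) (hξ : IsPrimitiveRoot ξ (r + 1)) :
    ∑ k ∈ Finset.Icc 1 r, (ξ ^ k + 1) *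
      ((ξ ^ k - 1)⁻¹ * (∑ μ ∈ Finset.Icc 1 r, (μ : ℂ) * ξ ^ (μ * k))
        * (∑ μ ∈ Finset.Icc 1 r, (μ : ℂ) * ξ ^ (-((μ : ℤ) * k)))) = 0 :=
  stmt_6_general r ξ hξ
end

section
/- Let ξ be a primitive (r+1)-th root of unity and define g_k(ξ) = (1/(ξ^k − 1)) · (∑_{μ=1}^r μ ξ^{μk}) · (∑_{μ=1}^r μ ξ^{−μk}) for 1 ≤ k ≤ r. Then ∑_{k=1}^{r} g_k(ξ) = −(r+2)(r+1)² r / 24. -/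
/-!
Write `ζ = ξ ^ k` and `S z = ∑ μ z ^ μ`, so that the `k`-th term is `(ζ - 1)⁻¹ S(ζ) S(ζ⁻¹)`.
The reflection `k ↦ r + 1 - k` replaces `ζ` by `ζ⁻¹` and fixes `S(ζ) S(ζ⁻¹)`, while
`(ζ - 1)⁻¹ + (ζ⁻¹ - 1)⁻¹ = -1`; hence twice the sum is `-∑_{k=1}^r S(ξ^k) S(ξ^{-k})`.
Adding the `k = 0` term `(∑ μ)²`, this is Parseval's identity for the discrete Fourier transform
of `μ ↦ μ` on `ℤ/(r+1)`, which equals `(r + 1) ∑ μ²`.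
-/

open Finset

section Sums
variable {R : Type*} [CommSemiring R]

theorem two_mul_sum_Icc_natCast (m : ℕ) : 2 * ∑ μ ∈ Icc 1 m, (μ : R) = m * (m + 1) := by
  induction m with
  | zero => simp
  | succ m ih =>
    rw [sum_Icc_succ_top (by omega), mul_add, ih]
    push_cast; ring

theorem six_mul_sum_Icc_natCast_sq (m : ℕ) :
    6 * ∑ μ ∈ Icc 1 m, (μ : R) ^ 2 = m * (m + 1) * (2 * m + 1) := by
  induction m with
  | zero => simp
  | succ m ih =>
    rw [sum_Icc_succ_top (by omega), mul_add, ih]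
    push_cast; ring

end Sums

theorem inv_sub_one_add_inv_inv_sub_one {K : Type*} [Field K] {z : K} (hz : z ≠ 0) (hz1 : z ≠ 1) :
    (z - 1)⁻¹ + (z⁻¹ - 1)⁻¹ = -1 := by
  have : z - 1 ≠ 0 := sub_ne_zero.mpr hz1
  have : 1 - z ≠ 0 := sub_ne_zero.mpr hz1.symm
  field_simp
  ring

namespace IsPrimitiveRoot

variable {K : Type*} [Field K] {ξ : K}

theorem sum_range_pow_mul_inv_pow {n : ℕ} (hξ : IsPrimitiveRoot ξ n) {a b : ℕ}
    (ha : a < n) (hb : b < n) :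
    ∑ k ∈ range n, (ξ ^ k) ^ a * ((ξ ^ k)⁻¹) ^ b = if a = b then (n : K) else 0 := by
  have hξ0 : ξ ≠ 0 := hξ.ne_zero (by omega)
  have hterm : ∀ k, (ξ ^ k) ^ a * ((ξ ^ k)⁻¹) ^ b = (ξ ^ a * (ξ ^ b)⁻¹) ^ k := by
    intro k; rw [inv_pow, ← pow_mul, ← pow_mul, mul_pow, inv_pow, ← pow_mul, ← pow_mul,
      mul_comm k a, mul_comm k b]
  simp_rw [hterm]
  split_ifs with hab
  · subst hab; simp [hξ0]
  · have hne : ξ ^ a * (ξ ^ b)⁻¹ ≠ 1 := fun h =>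
      hab (hξ.pow_inj ha hb (mul_inv_eq_one₀ (pow_ne_zero _ hξ0) |>.mp h))
    rw [geom_sum_eq hne, mul_pow, inv_pow, ← pow_mul, ← pow_mul, mul_comm a, mul_comm b,
      pow_mul, pow_mul, hξ.pow_eq_one]
    simp

theorem sum_range_sum_mul_sum_inv {n : ℕ} (hξ : IsPrimitiveRoot ξ n) {s : Finset ℕ}
    (hs : s ⊆ range n) (f : ℕ → K) :
    ∑ k ∈ range n, (∑ a ∈ s, f a * (ξ ^ k) ^ a) * (∑ b ∈ s, f b * ((ξ ^ k)⁻¹) ^ b)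
      = n * ∑ a ∈ s, f a * f a := by
  simp_rw [sum_mul_sum, mul_mul_mul_comm]
  rw [sum_comm, mul_sum]
  refine sum_congr rfl fun a ha => ?_
  rw [sum_comm]
  simp_rw [← mul_sum]
  rw [sum_congr rfl fun b hb =>
    congrArg _ (hξ.sum_range_pow_mul_inv_pow (mem_range.mp (hs ha)) (mem_range.mp (hs hb)))]
  simp [ha]
  ring

theorem sum_Icc_inv {M : Type*} [AddCommMonoid M] {r : ℕ} (hξ : IsPrimitiveRoot ξ (r + 1))
    (F : K → M) : ∑ k ∈ Icc 1 r, F (ξ ^ k)⁻¹ = ∑ k ∈ Icc 1 r, F (ξ ^ k) := by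
  refine sum_nbij' (fun k => r + 1 - k) (fun k => r + 1 - k) ?_ ?_ ?_ ?_ fun k hk => ?_
  all_goals try (intro k hk; simp only [mem_Icc] at hk ⊢; omega)
  simp only [mem_Icc] at hk
  rw [← inv_eq_of_mul_eq_one_left (a := ξ ^ (r + 1 - k)) (b := ξ ^ k)]
  rw [← pow_add, Nat.sub_add_cancel (by omega), hξ.pow_eq_one]

theorem two_mul_sum_Icc_inv_sub_one_mul {r : ℕ} (hξ : IsPrimitiveRoot ξ (r + 1)) (P : K → K)
    (hP : ∀ z, P z⁻¹ = P z) :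
    2 * ∑ k ∈ Icc 1 r, (ξ ^ k - 1)⁻¹ * P (ξ ^ k) = -∑ k ∈ Icc 1 r, P (ξ ^ k) := by
  rw [two_mul]
  nth_rw 2 [← hξ.sum_Icc_inv (fun z => (z - 1)⁻¹ * P z)]
  rw [← sum_add_distrib, ← sum_neg_distrib]
  refine sum_congr rfl fun k hk => ?_
  simp only [mem_Icc] at hk
  have hξk0 : ξ ^ k ≠ 0 := pow_ne_zero _ (hξ.ne_zero (by omega))
  have hξk1 : ξ ^ k ≠ 1 := hξ.pow_ne_one_of_pos_of_lt (by omega) (by omega)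
  rw [hP, ← add_mul, inv_sub_one_add_inv_inv_sub_one hξk0 hξk1, neg_one_mul]

theorem twelve_mul_sum_Icc_sum_mul_sum_inv {r : ℕ} (hξ : IsPrimitiveRoot ξ (r + 1)) :
    12 * ∑ k ∈ Icc 1 r,
        (∑ μ ∈ Icc 1 r, (μ : K) * (ξ ^ k) ^ μ) * (∑ μ ∈ Icc 1 r, (μ : K) * ((ξ ^ k)⁻¹) ^ μ)
      = (r + 1) ^ 2 * r * (r + 2) := by
  have hsub : Icc 1 r ⊆ range (r + 1) := fun μ hμ => by
    simp only [mem_Icc, mem_range] at hμ ⊢; omega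
  have hparseval := hξ.sum_range_sum_mul_sum_inv hsub (fun μ => (μ : K))
  rw [sum_range_eq_add_Ico _ (by omega), Ico_add_one_right_eq_Icc] at hparseval
  simp only [pow_zero, inv_one, one_pow, mul_one] at hparseval
  have h1 := two_mul_sum_Icc_natCast (R := K) r
  have h2 := six_mul_sum_Icc_natCast_sq (R := K) r
  simp only [sq] at h2
  push_cast at hparseval
  linear_combination 12 * hparseval + 2 * (r + 1) * h2
    - 3 * (2 * ∑ μ ∈ Icc 1 r, (μ : K) + r * (r + 1)) * h1

end IsPrimitiveRoot

theorem stmt_7_general (r : ℕ) (ξ : ℂ) (hξ : IsPrimitiveRoot ξ (r + 1)) :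
    ∑ k ∈ Finset.Icc 1 r,
      ((ξ ^ k - 1)⁻¹ * (∑ μ ∈ Finset.Icc 1 r, (μ : ℂ) * ξ ^ (μ * k))
        * (∑ μ ∈ Finset.Icc 1 r, (μ : ℂ) * ξ ^ (-((μ : ℤ) * k))))
      = -((r : ℂ) + 2) * ((r : ℂ) + 1) ^ 2 * (r : ℂ) / 24 := by
  set S : ℂ → ℂ := fun z => ∑ μ ∈ Icc 1 r, (μ : ℂ) * z ^ μ
  have hterm : ∀ k : ℕ, (ξ ^ k - 1)⁻¹ * (∑ μ ∈ Icc 1 r, (μ : ℂ) * ξ ^ (μ * k))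
      * (∑ μ ∈ Icc 1 r, (μ : ℂ) * ξ ^ (-((μ : ℤ) * k)))
      = (ξ ^ k - 1)⁻¹ * (S (ξ ^ k) * S (ξ ^ k)⁻¹) := by
    intro k
    simp only [S, mul_assoc, mul_comm _ k, mul_comm _ (k : ℤ), pow_mul, zpow_neg, zpow_mul,
      zpow_natCast, inv_pow]
  rw [sum_congr rfl fun k _ => hterm k]
  have hsym := hξ.two_mul_sum_Icc_inv_sub_one_mul (fun z => S z * S z⁻¹)
    fun z => by simp only [inv_inv, mul_comm]
  have hparseval := hξ.twelve_mul_sum_Icc_sum_mul_sum_inv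
  linear_combination hsym / 2 - hparseval / 24

/-- With `ξ` a primitive `(r+1)`-th root of unity and
`g_k(ξ) = (ξ^k−1)⁻¹ (∑_{μ=1}^r μ ξ^{μk})(∑_{μ=1}^r μ ξ^{−μk})`, one has
`∑_{k=1}^r g_k(ξ) = −(r+2)(r+1)² r / 24`. -/
theorem stmt_7 (r : ℕ) (hr : 0 < r) (ξ : ℂ) (hξ : IsPrimitiveRoot ξ (r + 1)) :
    ∑ k ∈ Finset.Icc 1 r,
      ((ξ ^ k - 1)⁻¹ * (∑ μ ∈ Finset.Icc 1 r, (μ : ℂ) * ξ ^ (μ * k))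
        * (∑ μ ∈ Finset.Icc 1 r, (μ : ℂ) * ξ ^ (-((μ : ℤ) * k))))
      = -((r : ℂ) + 2) * ((r : ℂ) + 1) ^ 2 * (r : ℂ) / 24 :=
  stmt_7_general r ξ hξ
end

section
/- In the graded commutative ring A = ℤ[h, ξ]/(h^{r+1}, ξ(ξ−h)^{r+1}) (the cohomology ring of X = P_{P^r}(O(−1)^{r+1} ⊕ O)), the element of top degree 2r+1 in the expansion of (1+h)^{r+1}(1+ξ)(1+ξ−h)^{r+1}(2h−ξ) equals −(r+1) · h^r ξ^{r+1}, where h^r ξ^{r+1} is the positive generator of the degree-(2r+1) part. Equivalently, the intersection number (c_{2r}(X)·(2h−ξ)) = −(r+1). -/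
/-!
Put `η = ξ - h`, so that `2h - ξ = h - η` and the relations read `h^{r+1} = 0` and
`ξ η^{r+1} = 0`; in particular `η^{r+2} = -h η^{r+1}` and `h^r ξ^{r+1} = h^r η^{r+1}`.
Since `(1+h)^{r+1}(1+ξ)(1+η)^{r+1} = P (1+ξ)` with `P = (1+h)^{r+1}(1+η)^{r+1}`, we get
`c_{2r} = P_{2r} + ξ P_{2r-1}`, where `P_n = ∑_{a+b=n} C(r+1,a) C(r+1,b) h^a η^b`.
Modulo the relations only `a ∈ {r-1, r}` survives in both sums; the `ξ P_{2r-1}` part is killed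
by `h - η`, and `P_{2r} (h - η) = (2·C(r+1,2) - (r+1)^2) h^r η^{r+1} = -(r+1) h^r η^{r+1}`.
-/

open MvPolynomial Finset

def binomialPart {R : Type*} [Semiring R] (m k n : ℕ) (x y : R) : R :=
  ∑ p ∈ antidiagonal n, (m.choose p.1 * k.choose p.2 : R) * x ^ p.1 * y ^ p.2

theorem pow_mul_add_pow_eq_of_pow_succ_eq_zero {R : Type*} [CommRing R] {x : R} {n : ℕ}
    (hx : x ^ (n + 1) = 0) (y : R) (m : ℕ) : x ^ n * (x + y) ^ m = x ^ n * y ^ m := by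
  obtain ⟨q, hq⟩ : x ∣ (x + y) ^ m - y ^ m := by simpa using sub_dvd_pow_sub_pow (x + y) y m
  linear_combination x ^ n * hq + q * hx

theorem Nat.cast_choose_add_two_mul_two {R : Type*} [CommRing R] (s : ℕ) :
    ((s + 2).choose s : R) * 2 = (s + 2) * (s + 1) := by
  rw [Nat.choose_symm_add]
  have h2 : (s + 2).choose 2 * 2 = (s + 2) * (s + 1) := by
    simpa [mul_comm] using (Nat.add_one_mul_choose_eq (s + 1) 1).symm
  simpa using congrArg (Nat.cast : ℕ → R) h2

section Reduction

variable {R : Type*} [CommRing R] {s : ℕ} {h η : R}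

theorem binomialPart_two_mul_add_two (hh : h ^ (s + 2) = 0) :
    binomialPart (s + 2) (s + 2) (2 * s + 2) h η
      = (s + 2).choose s * h ^ s * η ^ (s + 2) + (s + 2) ^ 2 * h ^ (s + 1) * η ^ (s + 1) := by
  rw [binomialPart,
    sum_eq_add_of_mem (s, s + 2) (s + 1, s + 1) (HasAntidiagonal.mem_antidiagonal.mpr (by ring))
      (HasAntidiagonal.mem_antidiagonal.mpr (by ring)) (by simp)]
  · simp only [Nat.choose_self, Nat.choose_succ_self_right]
    push_cast
    ring
  · rintro ⟨a, b⟩ hab hne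
    simp only [HasAntidiagonal.mem_antidiagonal, ne_eq, Prod.mk.injEq] at hab hne
    rcases le_or_gt (s + 2) a with ha | ha
    · simp [pow_eq_zero_of_le ha hh]
    · simp [Nat.choose_eq_zero_of_lt (show s + 2 < b by omega)]

theorem binomialPart_two_mul_add_one_mul_add (hh : h ^ (s + 2) = 0)
    (hξ : (h + η) * η ^ (s + 2) = 0) :
    binomialPart (s + 2) (s + 2) (2 * s + 1) h η * (h + η)
      = (s + 2) * (s + 2).choose s * (h ^ s * η ^ (s + 1) + h ^ (s + 1) * η ^ s) * (h + η) := by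
  rw [binomialPart, sum_mul,
    sum_eq_add_of_mem (s, s + 1) (s + 1, s) (HasAntidiagonal.mem_antidiagonal.mpr (by ring))
      (HasAntidiagonal.mem_antidiagonal.mpr (by ring)) (by simp)]
  · simp only [Nat.choose_succ_self_right]
    push_cast
    ring
  · rintro ⟨a, b⟩ hab hne
    simp only [HasAntidiagonal.mem_antidiagonal, ne_eq, Prod.mk.injEq] at hab hne
    rcases le_or_gt (s + 2) a with ha | ha
    · simp [pow_eq_zero_of_le ha hh]
    · obtain ⟨k, rfl⟩ := Nat.exists_eq_add_of_le (show s + 2 ≤ b by omega)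
      linear_combination ((s + 2).choose a * (s + 2).choose (s + 2 + k) * h ^ a * η ^ k : R) * hξ

theorem binomialPart_add_binomialPart_mul_mul_sub_eq (hh : h ^ (s + 2) = 0)
    (hξ : (h + η) * η ^ (s + 2) = 0) :
    (binomialPart (s + 2) (s + 2) (2 * s + 2) h η
        + binomialPart (s + 2) (s + 2) (2 * s + 1) h η * (h + η)) * (h - η)
      = -(s + 2) * (h ^ (s + 1) * (h + η) ^ (s + 2)) := by
  rw [binomialPart_two_mul_add_two hh, binomialPart_two_mul_add_one_mul_add hh hξ,
    pow_mul_add_pow_eq_of_pow_succ_eq_zero hh]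
  set c : R := ↑((s + 2).choose s)
  linear_combination h ^ (s + 1) * η ^ (s + 2) * Nat.cast_choose_add_two_mul_two (R := R) s
    + (c * (s + 2) * (η ^ (s + 1) + h * η ^ s) + (s + 2) ^ 2 * η ^ (s + 1)) * hh
    - (c + c * (s + 2)) * h ^ s * hξ

end Reduction

namespace MvPolynomial

variable {σ R : Type*}

section CommSemiring

variable [CommSemiring R]

theorem homogeneousComponent_sum_of_isHomogeneous {ι : Type*} (s : Finset ι)
    {f : ι → MvPolynomial σ R} {d : ι → ℕ} (hf : ∀ i ∈ s, (f i).IsHomogeneous (d i))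
    (n : ℕ) :
    homogeneousComponent n (∑ i ∈ s, f i) = ∑ i ∈ s with d i = n, f i := by
  rw [map_sum, sum_filter]
  refine sum_congr rfl fun i hi => ?_
  rw [homogeneousComponent_of_mem (hf i hi)]
  exact if_congr eq_comm rfl rfl

theorem homogeneousComponent_add_mul_of_isHomogeneous {p q : MvPolynomial σ R} {d : ℕ}
    (hq : q.IsHomogeneous d) (n : ℕ) :
    homogeneousComponent (n + d) (p * q) = homogeneousComponent n p * q := by
  induction p using MvPolynomial.induction_on' with
  | monomial c a =>
    have hm : (monomial c a).IsHomogeneous c.degree := isHomogeneous_monomial a rfl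
    rw [homogeneousComponent_of_mem (hm.mul hq), homogeneousComponent_of_mem hm]
    split_ifs <;> simp_all
  | add p₁ p₂ h₁ h₂ => rw [add_mul, map_add, map_add, h₁, h₂, add_mul]

theorem homogeneousComponent_one_add_pow_mul_one_add_pow {x y : MvPolynomial σ R}
    (hx : x.IsHomogeneous 1) (hy : y.IsHomogeneous 1) (m k n : ℕ) :
    homogeneousComponent n ((1 + x) ^ m * (1 + y) ^ k) = binomialPart m k n x y := by
  have hexp : (1 + x) ^ m * (1 + y) ^ k = ∑ p ∈ range (m + 1) ×ˢ range (k + 1),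
      (m.choose p.1 * k.choose p.2 : MvPolynomial σ R) * x ^ p.1 * y ^ p.2 := by
    rw [add_comm 1 x, add_comm 1 y, add_pow, add_pow, sum_mul_sum, sum_product]
    simp only [one_pow, mul_one]
    exact sum_congr rfl fun a _ => sum_congr rfl fun b _ => by ring
  have hhom : ∀ p ∈ range (m + 1) ×ˢ range (k + 1),
      ((m.choose p.1 * k.choose p.2 : MvPolynomial σ R) * x ^ p.1 * y ^ p.2).IsHomogeneous
        (p.1 + p.2) := fun p _ => by
    simpa [mul_assoc] using
      ((hx.pow p.1).mul (hy.pow p.2)).C_mul ((m.choose p.1 * k.choose p.2 : ℕ) : R)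
  rw [hexp, homogeneousComponent_sum_of_isHomogeneous _ hhom, binomialPart]
  refine sum_subset (fun p hp => mem_antidiagonal.mpr (mem_filter.mp hp).2) fun p hp hp' => ?_
  simp only [mem_filter, mem_product, mem_range, mem_antidiagonal.mp hp, and_true, not_and_or,
    not_lt] at hp'
  rcases hp' with ha | hb
  · simp [Nat.choose_eq_zero_of_lt ha]
  · simp [Nat.choose_eq_zero_of_lt hb]

end CommSemiring

theorem map_homogeneousComponent_mul_sub_eq {A : Type*} [CommRing R] [CommRing A]
    (φ : MvPolynomial σ R →+* A) {x y : MvPolynomial σ R} (hx : x.IsHomogeneous 1)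
    (hy : y.IsHomogeneous 1) {s : ℕ} (hφx : φ (x ^ (s + 2)) = 0)
    (hφy : φ ((x + y) * y ^ (s + 2)) = 0) :
    φ (homogeneousComponent (2 * s + 2) ((1 + x) ^ (s + 2) * (1 + y) ^ (s + 2) * (1 + (x + y)))
        * (x - y)) = φ (-(s + 2) * (x ^ (s + 1) * (x + y) ^ (s + 2))) := by
  rw [mul_add, mul_one, map_add, show 2 * s + 2 = 2 * s + 1 + 1 from rfl,
    homogeneousComponent_add_mul_of_isHomogeneous (hx.add hy),
    homogeneousComponent_one_add_pow_mul_one_add_pow hx hy,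
    homogeneousComponent_one_add_pow_mul_one_add_pow hx hy]
  simp only [binomialPart, map_mul, map_add, map_sub, map_sum, map_pow, map_natCast, map_neg,
    map_ofNat] at hφx hφy ⊢
  exact binomialPart_add_binomialPart_mul_mul_sub_eq hφx hφy

end MvPolynomial

/-- In `A = ℤ[h,ξ]/(h^{r+1}, ξ(ξ−h)^{r+1})`, the degree `2r+1` part of
`(1+h)^{r+1}(1+ξ)(1+ξ−h)^{r+1}(2h−ξ)`, i.e. `c_{2r}(X)·(2h−ξ)`, equals
`−(r+1)·h^r ξ^{r+1}`. -/
theorem stmt_8 (r : ℕ) (hr : 0 < r) :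
    letI h : MvPolynomial (Fin 2) ℤ := X 0
    letI ξ : MvPolynomial (Fin 2) ℤ := X 1
    letI I : Ideal (MvPolynomial (Fin 2) ℤ) :=
      Ideal.span {h ^ (r + 1), ξ * (ξ - h) ^ (r + 1)}
    Ideal.Quotient.mk I
        (MvPolynomial.homogeneousComponent (2 * r)
            ((1 + h) ^ (r + 1) * (1 + ξ) * (1 + ξ - h) ^ (r + 1))
          * (2 * h - ξ))
      = Ideal.Quotient.mk I (-((r : MvPolynomial (Fin 2) ℤ) + 1)
          * h ^ r * ξ ^ (r + 1)) := by
  obtain ⟨s, rfl⟩ : ∃ s, r = s + 1 := ⟨r - 1, by omega⟩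
  set I : Ideal (MvPolynomial (Fin 2) ℤ) :=
    Ideal.span {X 0 ^ (s + 1 + 1), X 1 * (X 1 - X 0) ^ (s + 1 + 1)}
  have key := map_homogeneousComponent_mul_sub_eq (Ideal.Quotient.mk I) (isHomogeneous_X ℤ 0)
    ((isHomogeneous_X ℤ 1).sub (isHomogeneous_X ℤ 0)) (s := s)
    (Ideal.Quotient.eq_zero_iff_mem.mpr (Ideal.subset_span (by simp)))
    (Ideal.Quotient.eq_zero_iff_mem.mpr (Ideal.subset_span (by simp [add_sub_cancel])))
  rw [add_sub_cancel] at key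
  have hchern : (1 + X 0) ^ (s + 1 + 1) * (1 + X 1) * (1 + X 1 - X 0) ^ (s + 1 + 1)
      = ((1 + X 0) ^ (s + 2) * (1 + (X 1 - X 0)) ^ (s + 2) * (1 + X 1) :
        MvPolynomial (Fin 2) ℤ) := by
    ring
  rw [hchern, show 2 * (s + 1) = 2 * s + 2 by ring,
    show (2 * X 0 - X 1 : MvPolynomial (Fin 2) ℤ) = X 0 - (X 1 - X 0) by ring, key]
  push_cast
  ring_nf
end
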